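/- Let n ≥ 4 and let x be an involution of W(D̃_n) with labelled cycle type (m, k_e, k_o, l). Then k_e and k_o are both even; and if at least one of k_e, k_o, l is nonzero, then the conjugacy class of x in W(D̃_n) equals its conjugacy class in W(B̃_n) or its conjugacy class in B̄(B̃_n) (or both). -/

import Mathlib

noncomputable section

open Equiv Finset

/-- Points `±1, …, ±n`, encoded as a sign together with an index. -/
abbrev Pt (n : ℕ) := ℤˣ × Fin n

/-- Negation of a point. -/
def negPt {n : ℕ} (x : Pt n) : Pt n := (-x.1, x.2)

/-- The hyperoctahedral group `H_n` of signed permutations: bijections `σ` of `{±1,…,±n}`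
with `σ(-i) = -σ(i)`. -/
def Hgrp (n : ℕ) : Subgroup (Equiv.Perm (Pt n)) where
  carrier := {σ | ∀ x, σ (negPt x) = negPt (σ x)}
  one_mem' := fun _ => rfl
  mul_mem' := by
    intro σ τ hσ hτ x
    have hσ' : ∀ y, σ (negPt y) = negPt (σ y) := hσ
    have hτ' : ∀ y, τ (negPt y) = negPt (τ y) := hτ
    simp only [Equiv.Perm.mul_apply]
    rw [hτ' x, hσ' (τ x)]
  inv_mem' := by
    intro σ hσ x
    have hσ' : ∀ y, σ (negPt y) = negPt (σ y) := hσ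
    apply σ.injective
    have hinv : ∀ y, σ (σ⁻¹ y) = y := fun y => σ.apply_symm_apply y
    rw [hinv, hσ', hinv]

lemma Hgrp_apply {n : ℕ} {σ : Equiv.Perm (Pt n)} (hσ : σ ∈ Hgrp n) (δ : ℤˣ) (k : Fin n) :
    σ (δ, k) = (δ * (σ (1, k)).1, (σ (1, k)).2) := by
  have hσ' : ∀ y, σ (negPt y) = negPt (σ y) := hσ
  rcases Int.units_eq_one_or δ with h | h <;> subst h
  · simp
  · have h2 := hσ' (1, k)
    simp only [negPt] at h2
    simpa using h2

/-- The (right) action of a signed permutation on integer vectors: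
`(v^σ)_j = ε·v_i` whenever `σ(i) = ε j`. -/
def actV {n : ℕ} (σ : Equiv.Perm (Pt n)) (v : Fin n → ℤ) : Fin n → ℤ :=
  fun j => ((σ (1, j)).1 : ℤ) * v (σ (1, j)).2

lemma actV_add {n : ℕ} (σ : Equiv.Perm (Pt n)) (a b : Fin n → ℤ) :
    actV σ (a + b) = actV σ a + actV σ b := by
  funext j; simp [actV, mul_add]

lemma actV_zero {n : ℕ} (σ : Equiv.Perm (Pt n)) : actV σ 0 = 0 := by
  funext j; simp [actV]

lemma actV_neg {n : ℕ} (σ : Equiv.Perm (Pt n)) (v : Fin n → ℤ) :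
    actV σ (-v) = -actV σ v := by
  funext j; simp [actV]

lemma actV_one {n : ℕ} (v : Fin n → ℤ) : actV 1 v = v := by
  funext j; simp [actV]

lemma actV_mul {n : ℕ} {σ : Equiv.Perm (Pt n)} (hσ : σ ∈ Hgrp n) (τ : Equiv.Perm (Pt n))
    (v : Fin n → ℤ) : actV (σ * τ) v = actV τ (actV σ v) := by
  funext j
  have h := Hgrp_apply hσ (τ (1, j)).1 (τ (1, j)).2
  rw [Prod.mk.eta] at h
  simp only [actV, Equiv.Perm.mul_apply, h]
  push_cast
  ring

/-- The affine Weyl group of type `C̃ₙ`: pairs `(σ, v)` with `σ` a signed permutation and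
`v ∈ ℤⁿ`, with multiplication `(σ,v)(τ,u) = (στ, v^τ + u)`. -/
@[ext] structure WC (n : ℕ) where
  sigma : Hgrp n
  vec : Fin n → ℤ

namespace WC

variable {n : ℕ}

instance : Mul (WC n) :=
  ⟨fun x y => ⟨x.sigma * y.sigma, actV (y.sigma : Equiv.Perm (Pt n)) x.vec + y.vec⟩⟩

instance : One (WC n) := ⟨⟨1, 0⟩⟩

instance : Inv (WC n) :=
  ⟨fun x => ⟨x.sigma⁻¹, -actV ((x.sigma⁻¹ : Hgrp n) : Equiv.Perm (Pt n)) x.vec⟩⟩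

@[simp] lemma mul_sigma (x y : WC n) : (x * y).sigma = x.sigma * y.sigma := rfl
@[simp] lemma mul_vec (x y : WC n) :
    (x * y).vec = actV (y.sigma : Equiv.Perm (Pt n)) x.vec + y.vec := rfl
@[simp] lemma one_sigma : (1 : WC n).sigma = 1 := rfl
@[simp] lemma one_vec : (1 : WC n).vec = 0 := rfl
@[simp] lemma inv_sigma (x : WC n) : (x⁻¹).sigma = x.sigma⁻¹ := rfl
@[simp] lemma inv_vec (x : WC n) :
    (x⁻¹).vec = -actV ((x.sigma⁻¹ : Hgrp n) : Equiv.Perm (Pt n)) x.vec := rfl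

instance : Group (WC n) where
  mul_assoc a b c := by
    refine WC.ext ?_ ?_
    · exact mul_assoc _ _ _
    · show actV (c.sigma : Equiv.Perm (Pt n))
          (actV (b.sigma : Equiv.Perm (Pt n)) a.vec + b.vec) + c.vec
        = actV (((b.sigma * c.sigma : Hgrp n)) : Equiv.Perm (Pt n)) a.vec
          + (actV (c.sigma : Equiv.Perm (Pt n)) b.vec + c.vec)
      rw [actV_add]
      have hc : (((b.sigma * c.sigma : Hgrp n)) : Equiv.Perm (Pt n))
          = (b.sigma : Equiv.Perm (Pt n)) * (c.sigma : Equiv.Perm (Pt n)) := rfl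
      rw [hc, actV_mul b.sigma.2]
      abel
  one_mul a := by
    refine WC.ext (one_mul _) ?_
    show actV (a.sigma : Equiv.Perm (Pt n)) 0 + a.vec = a.vec
    rw [actV_zero, zero_add]
  mul_one a := by
    refine WC.ext (mul_one _) ?_
    show actV ((1 : Hgrp n) : Equiv.Perm (Pt n)) a.vec + 0 = a.vec
    have h1 : ((1 : Hgrp n) : Equiv.Perm (Pt n)) = 1 := rfl
    rw [h1, actV_one, add_zero]
  inv_mul_cancel a := by
    refine WC.ext (inv_mul_cancel _) ?_
    show actV (a.sigma : Equiv.Perm (Pt n))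
        (-actV ((a.sigma⁻¹ : Hgrp n) : Equiv.Perm (Pt n)) a.vec) + a.vec = 0
    rw [actV_neg, ← actV_mul (a.sigma⁻¹ : Hgrp n).2]
    have h1 : ((a.sigma⁻¹ : Hgrp n) : Equiv.Perm (Pt n)) * (a.sigma : Equiv.Perm (Pt n)) = 1 := by
      rw [← Subgroup.coe_mul, inv_mul_cancel, Subgroup.coe_one]
    rw [h1, actV_one, neg_add_cancel]

end WC

/-- `Σw`: the coordinate sum of the translation part. -/
def sumV {n : ℕ} (x : WC n) : ℤ := ∑ i, x.vec i

/-- `minus(w)`: the number of `i ∈ {1,…,n}` with `σ(i) < 0`. -/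
def minusCard {n : ℕ} (x : WC n) : ℕ :=
  (Finset.univ.filter fun i : Fin n => ((x.sigma : Equiv.Perm (Pt n)) (1, i)).1 = -1).card
lemma permOf_bij {n : ℕ} (σ : Hgrp n) :
    Function.Bijective (fun i : Fin n => ((σ : Equiv.Perm (Pt n)) (1, i)).2) := by
  rw [Fintype.bijective_iff_injective_and_card]
  refine ⟨?_, rfl⟩
  intro i j hij
  simp only at hij
  have hmem : ∀ y, (σ : Equiv.Perm (Pt n)) (negPt y) = negPt ((σ : Equiv.Perm (Pt n)) y) := σ.2
  by_cases h1 : ((σ : Equiv.Perm (Pt n)) (1, i)).1 = ((σ : Equiv.Perm (Pt n)) (1, j)).1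
  · have heq : (σ : Equiv.Perm (Pt n)) (1, i) = (σ : Equiv.Perm (Pt n)) (1, j) :=
      Prod.ext h1 hij
    have h2 := (σ : Equiv.Perm (Pt n)).injective heq
    exact congrArg Prod.snd h2
  · exfalso
    have hfst : ((σ : Equiv.Perm (Pt n)) (1, i)).1 = -((σ : Equiv.Perm (Pt n)) (1, j)).1 := by
      rcases Int.units_eq_one_or ((σ : Equiv.Perm (Pt n)) (1, i)).1 with ha | ha <;>
        rcases Int.units_eq_one_or ((σ : Equiv.Perm (Pt n)) (1, j)).1 with hb | hb <;>
        first
          | exact absurd (ha.trans hb.symm) h1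
          | simp [ha, hb]
    have hne : (σ : Equiv.Perm (Pt n)) (1, i) = negPt ((σ : Equiv.Perm (Pt n)) (1, j)) :=
      Prod.ext hfst hij
    rw [← hmem (1, j)] at hne
    have h3 := (σ : Equiv.Perm (Pt n)).injective hne
    have h4 := congrArg Prod.fst h3
    simp only [negPt] at h4
    exact absurd h4 (by decide)

/-- The underlying (unsigned) permutation of `{1,…,n}` induced by a signed permutation. -/
def permOf {n : ℕ} (σ : Hgrp n) : Equiv.Perm (Fin n) :=
  Equiv.ofBijective _ (permOf_bij σ)

@[simp] lemma permOf_apply {n : ℕ} (σ : Hgrp n) (i : Fin n) :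
    permOf σ i = ((σ : Equiv.Perm (Pt n)) (1, i)).2 := rfl

lemma unitsCast_zmod2 (ε : ℤˣ) : (((ε : ℤ) : ZMod 2)) = 1 := by
  rcases Int.units_eq_one_or ε with h | h <;> subst h <;> decide

lemma sumV_mul {n : ℕ} (x y : WC n) :
    ((sumV (x * y) : ℤ) : ZMod 2) = ((sumV x : ℤ) : ZMod 2) + ((sumV y : ℤ) : ZMod 2) := by
  have key : ∀ (σ : Hgrp n) (v : Fin n → ℤ),
      (∑ i, ((actV (σ : Equiv.Perm (Pt n)) v i : ℤ) : ZMod 2)) = ∑ i, ((v i : ℤ) : ZMod 2) := by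
    intro σ v
    have hterm : ∀ i, ((actV (σ : Equiv.Perm (Pt n)) v i : ℤ) : ZMod 2)
        = ((v (permOf σ i) : ℤ) : ZMod 2) := by
      intro i
      show ((((((σ : Equiv.Perm (Pt n)) (1, i)).1 : ℤ)) * v (((σ : Equiv.Perm (Pt n)) (1, i)).2) : ℤ) : ZMod 2) = _
      push_cast
      rw [unitsCast_zmod2, one_mul]
      rfl
    rw [Finset.sum_congr rfl (fun i _ => hterm i)]
    exact Equiv.sum_comp (permOf σ) (fun i => ((v i : ℤ) : ZMod 2))
  have hvec : (x * y).vec = actV (y.sigma : Equiv.Perm (Pt n)) x.vec + y.vec := rfl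
  unfold sumV
  rw [hvec]
  have hsplit : (∑ i, (actV (y.sigma : Equiv.Perm (Pt n)) x.vec + y.vec) i)
      = (∑ i, actV (y.sigma : Equiv.Perm (Pt n)) x.vec i) + ∑ i, y.vec i := by
    rw [← Finset.sum_add_distrib]; rfl
  rw [hsplit]
  push_cast
  rw [key y.sigma x.vec]

lemma minusCard_one {n : ℕ} : minusCard (1 : WC n) = 0 := by
  unfold minusCard
  rw [Finset.card_eq_zero, Finset.filter_eq_empty_iff]
  intro i _
  show ¬ (((1 : Hgrp n) : Equiv.Perm (Pt n)) (1, i)).1 = -1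
  simp only [OneMemClass.coe_one, Equiv.Perm.one_apply]
  decide

lemma ite_units_mul (u w : ℤˣ) :
    ((if u * w = -1 then (1 : ZMod 2) else 0)) =
      (if u = -1 then (1 : ZMod 2) else 0) + (if w = -1 then (1 : ZMod 2) else 0) := by
  rcases Int.units_eq_one_or u with h | h <;> rcases Int.units_eq_one_or w with h' | h' <;>
    subst h <;> subst h' <;> decide

lemma minusCard_mul {n : ℕ} (x y : WC n) :
    ((minusCard (x * y) : ℕ) : ZMod 2) = (minusCard x : ZMod 2) + (minusCard y : ZMod 2) := by
  have hσ : ∀ i : Fin n, ((x * y).sigma : Equiv.Perm (Pt n)) (1, i)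
      = (x.sigma : Equiv.Perm (Pt n)) ((y.sigma : Equiv.Perm (Pt n)) (1, i)) := fun i => rfl
  unfold minusCard
  rw [Finset.card_filter, Finset.card_filter, Finset.card_filter]
  push_cast
  have step : ∀ i : Fin n,
      ((if (((x * y).sigma : Equiv.Perm (Pt n)) (1, i)).1 = -1 then (1 : ZMod 2) else 0))
      = (if ((y.sigma : Equiv.Perm (Pt n)) (1, i)).1 = -1 then (1 : ZMod 2) else 0)
        + (if ((x.sigma : Equiv.Perm (Pt n)) (1, permOf y.sigma i)).1 = -1
            then (1 : ZMod 2) else 0) := by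
    intro i
    rw [hσ i]
    have h := Hgrp_apply x.sigma.2 ((y.sigma : Equiv.Perm (Pt n)) (1, i)).1
      ((y.sigma : Equiv.Perm (Pt n)) (1, i)).2
    rw [Prod.mk.eta] at h
    rw [h]
    exact ite_units_mul _ _
  calc (∑ i : Fin n, if (((x * y).sigma : Equiv.Perm (Pt n)) (1, i)).1 = -1
          then (1 : ZMod 2) else 0)
      = ∑ i : Fin n, ((if ((y.sigma : Equiv.Perm (Pt n)) (1, i)).1 = -1 then (1 : ZMod 2) else 0)
        + (if ((x.sigma : Equiv.Perm (Pt n)) (1, permOf y.sigma i)).1 = -1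
            then (1 : ZMod 2) else 0)) := Finset.sum_congr rfl (fun i _ => step i)
    _ = (∑ i : Fin n, if ((y.sigma : Equiv.Perm (Pt n)) (1, i)).1 = -1 then (1 : ZMod 2) else 0)
        + ∑ i : Fin n, (if ((x.sigma : Equiv.Perm (Pt n)) (1, permOf y.sigma i)).1 = -1
            then (1 : ZMod 2) else 0) := Finset.sum_add_distrib
    _ = (∑ i : Fin n, if ((x.sigma : Equiv.Perm (Pt n)) (1, i)).1 = -1 then (1 : ZMod 2) else 0)
        + ∑ i : Fin n, (if ((y.sigma : Equiv.Perm (Pt n)) (1, i)).1 = -1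
            then (1 : ZMod 2) else 0) := by
          rw [add_comm]
          congr 1
          exact Equiv.sum_comp (permOf y.sigma)
            (fun k => if ((x.sigma : Equiv.Perm (Pt n)) (1, k)).1 = -1 then (1 : ZMod 2) else 0)
lemma even_int_iff_zmod {a : ℤ} : Even a ↔ ((a : ZMod 2) = 0) := by
  rw [ZMod.intCast_zmod_eq_zero_iff_dvd a 2, Int.even_iff]
  push_cast
  omega

lemma sumV_one {n : ℕ} : sumV (1 : WC n) = 0 := by simp [sumV]

/-- The affine Weyl group of type `B̃ₙ`: the elements `w` of `W(C̃ₙ)` with `Σw` even. -/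
def WB (n : ℕ) : Subgroup (WC n) where
  carrier := {w | Even (sumV w)}
  one_mem' := by
    show Even (sumV (1 : WC n))
    rw [sumV_one]
    exact Even.zero
  mul_mem' := by
    intro a b ha hb
    have ha' : ((sumV a : ℤ) : ZMod 2) = 0 := even_int_iff_zmod.mp ha
    have hb' : ((sumV b : ℤ) : ZMod 2) = 0 := even_int_iff_zmod.mp hb
    refine even_int_iff_zmod.mpr ?_
    rw [sumV_mul, ha', hb', add_zero]
  inv_mem' := by
    intro a ha
    have ha' : ((sumV a : ℤ) : ZMod 2) = 0 := even_int_iff_zmod.mp ha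
    refine even_int_iff_zmod.mpr ?_
    have h1 := sumV_mul a⁻¹ a
    rw [inv_mul_cancel, sumV_one, ha', add_zero] at h1
    simpa using h1.symm

lemma intModEq_two_iff {a b : ℤ} : a ≡ b [ZMOD 2] ↔ ((a : ZMod 2) = (b : ZMod 2)) :=
  (ZMod.intCast_eq_intCast_iff a b 2).symm

/-- The second copy `B̄(B̃ₙ)` of the affine Weyl group of type `B̃ₙ` inside `W(C̃ₙ)`:
elements with `Σw ≡ minus(w) (mod 2)`. -/
def Bbar (n : ℕ) : Subgroup (WC n) where
  carrier := {w | sumV w ≡ (minusCard w : ℤ) [ZMOD 2]}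
  one_mem' := by
    show sumV (1 : WC n) ≡ ((minusCard (1 : WC n) : ℤ)) [ZMOD 2]
    rw [sumV_one, minusCard_one]
    rfl
  mul_mem' := by
    intro a b ha hb
    have ha' := intModEq_two_iff.mp ha
    have hb' := intModEq_two_iff.mp hb
    refine intModEq_two_iff.mpr ?_
    rw [sumV_mul, ha', hb']
    push_cast at ha' hb' ⊢
    rw [minusCard_mul]
  inv_mem' := by
    intro a ha
    have ha' := intModEq_two_iff.mp ha
    refine intModEq_two_iff.mpr ?_
    have h1 := sumV_mul a⁻¹ a
    have h2 := minusCard_mul a⁻¹ a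
    rw [inv_mul_cancel, sumV_one] at h1
    rw [inv_mul_cancel, minusCard_one] at h2
    push_cast at ha' h1 h2 ⊢
    linear_combination h1.symm - h2.symm - ha'

/-- The affine Weyl group of type `D̃ₙ`, as the intersection of the two `B̃ₙ`'s. -/
def WD (n : ℕ) : Subgroup (WC n) := WB n ⊓ Bbar n

instance : DecidablePred (fun k : ℤ => Even k) := fun _ => decidable_of_iff _ Int.even_iff.symm
instance : DecidablePred (fun k : ℤ => Odd k) := fun _ => decidable_of_iff _ Int.odd_iff.symm

/-- The labelled cycle type `(m, k_e, k_o, l)` of an element of `W(C̃ₙ)` (intended for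
involutions): `m` is the number of 2-cycles of `σ`, `k_e` (resp. `k_o`) is the number of
`i` with `σ(i) = -i` whose label `v_i` is even (resp. odd), and `l` is the number of fixed
points of `σ`. -/
def lct {n : ℕ} (x : WC n) : ℕ × ℕ × ℕ × ℕ :=
  ((Finset.univ.filter fun i : Fin n => ((x.sigma : Equiv.Perm (Pt n)) (1, i)).2 ≠ i).card / 2,
   (Finset.univ.filter fun i : Fin n =>
      (x.sigma : Equiv.Perm (Pt n)) (1, i) = (-1, i) ∧ Even (x.vec i)).card,
   (Finset.univ.filter fun i : Fin n =>
      (x.sigma : Equiv.Perm (Pt n)) (1, i) = (-1, i) ∧ Odd (x.vec i)).card,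
   (Finset.univ.filter fun i : Fin n => (x.sigma : Equiv.Perm (Pt n)) (1, i) = (1, i)).card)

/-- `f(x)`: twice the sum of the labels over one chosen entry of each 2-cycle (we choose the
entry with the smaller index), plus the sum of the labels over the negative 1-cycles.  Only
its residue modulo 4 is ever used, and for involutions that residue does not depend on the
choice of entries. -/
def fval {n : ℕ} (x : WC n) : ℤ :=
  2 * (∑ i ∈ Finset.univ.filter
        (fun i : Fin n => i < ((x.sigma : Equiv.Perm (Pt n)) (1, i)).2), x.vec i)
  + ∑ i ∈ Finset.univ.filter
      (fun i : Fin n => (x.sigma : Equiv.Perm (Pt n)) (1, i) = (-1, i)), x.vec i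

/-- The commuting graph on a set `X` of elements of a group: vertices are the elements
of `X`, and distinct vertices are adjacent exactly when they commute.  When `X` is a
conjugacy class of involutions this is the commuting involution graph `C(G,X)`. -/
def commGraph {M : Type*} [Group M] (X : Set M) : SimpleGraph X where
  Adj a b := a ≠ b ∧ (a : M) * (b : M) = (b : M) * (a : M)
  symm := ⟨fun a b h => ⟨h.1.symm, h.2.symm⟩⟩
  loopless := ⟨fun a h => h.1 rfl⟩

/-- The conjugacy class of `x` under conjugation by a subgroup `G`. -/
def ConjugacyClassOf {M : Type*} [Group M] (G : Subgroup M) (x : M) : Set M :=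
  {y | ∃ g ∈ G, g⁻¹ * x * g = y}

/-- `X` is a conjugacy class of involutions of the subgroup `G`. -/
def IsInvolutionConjClass {M : Type*} [Group M] (G : Subgroup M) (X : Set M) : Prop :=
  ∃ x ∈ G, orderOf x = 2 ∧ X = ConjugacyClassOf G x

/-- Sign change at the single coordinate `k`. -/
def negAt {n : ℕ} (k : Fin n) : Equiv.Perm (Pt n) :=
  Function.Involutive.toPerm (fun p => if p.2 = k then (-p.1, p.2) else p) (by
    intro p
    by_cases h : p.2 = k <;> simp [h, Prod.ext_iff])

lemma negAt_mem {n : ℕ} (k : Fin n) : negAt k ∈ Hgrp n := by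
  intro p
  show (if (negPt p).2 = k then (-(negPt p).1, (negPt p).2) else negPt p)
      = negPt (if p.2 = k then (-p.1, p.2) else p)
  by_cases h : p.2 = k <;> simp [negPt, h]

/-- The positive transposition of the coordinates `a` and `b`. -/
def swapPos {n : ℕ} (a b : Fin n) : Equiv.Perm (Pt n) :=
  Equiv.prodCongr (Equiv.refl ℤˣ) (Equiv.swap a b)

lemma swapPos_mem {n : ℕ} (a b : Fin n) : swapPos a b ∈ Hgrp n := fun _ => rfl

/-- The negative transposition of the coordinates `a` and `b` (for `a ≠ b` it sends
`a ↦ -b` and `b ↦ -a`). -/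
def negSwap {n : ℕ} (a b : Fin n) : Equiv.Perm (Pt n) := negAt b * negAt a * swapPos a b

lemma negSwap_mem {n : ℕ} (a b : Fin n) : negSwap a b ∈ Hgrp n :=
  mul_mem (mul_mem (negAt_mem b) (negAt_mem a)) (swapPos_mem a b)

/-- Constructor for elements of `W(C̃ₙ)`. -/
def mkW {n : ℕ} (σ : Equiv.Perm (Pt n)) (h : σ ∈ Hgrp n) (v : Fin n → ℤ) : WC n := ⟨⟨σ, h⟩, v⟩

/-- The simple reflection `r₁ = (σ, 0)` with `σ(1) = -1` (take `k = 0`); more generally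
`(σ, 0)` with `σ(k) = -k`. -/
def rFirstGen (n : ℕ) (k : Fin n) : WC n := mkW (negAt k) (negAt_mem k) 0

/-- The simple reflections `rᵢ = (σ, 0)`, `2 ≤ i ≤ n`, where `σ` exchanges `a` and `b`
positively (take `a, b` adjacent). -/
def swapGen (n : ℕ) (a b : Fin n) : WC n := mkW (swapPos a b) (swapPos_mem a b) 0

/-- The simple reflection `r_{n+1} = (σ, eₙ)` with `σ(n) = -n` (take `k = n-1`). -/
def rLastGen (n : ℕ) (k : Fin n) : WC n := mkW (negAt k) (negAt_mem k) (Pi.single k 1)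

/-- The reflections `s = (σ, e_{n-1} + eₙ)` (take `a = n-2`, `b = n-1`) and
`t = (σ, e₁ + e₂)` (take `a = 0`, `b = 1`), where `σ(a) = -b`, `σ(b) = -a`. -/
def negSwapGen (n : ℕ) (a b : Fin n) : WC n :=
  mkW (negSwap a b) (negSwap_mem a b) (Pi.single a 1 + Pi.single b 1)

/-- The projection `π : W(C̃ₙ) → Hₙ`, `(σ, v) ↦ σ`. -/
def projHom (n : ℕ) : WC n →* Equiv.Perm (Pt n) where
  toFun x := (x.sigma : Equiv.Perm (Pt n))
  map_one' := rfl
  map_mul' _ _ := rfl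

/-- The action of a signed permutation on real vectors. -/
def actR {n : ℕ} (σ : Equiv.Perm (Pt n)) (u : Fin n → ℝ) : Fin n → ℝ :=
  fun j => (((σ (1, j)).1 : ℤ) : ℝ) * u (σ (1, j)).2

/-- The affine action of `w = (σ,v) ∈ W(C̃ₙ)` on `ℝⁿ`: `u ↦ u^σ + v`. -/
def affAct {n : ℕ} (x : WC n) : (Fin n → ℝ) → (Fin n → ℝ) :=
  fun u => actR (x.sigma : Equiv.Perm (Pt n)) u + fun i => ((x.vec i : ℤ) : ℝ)

/-- The affine involution `φ` of `ℝⁿ` with `φ(u)ᵢ = 1/2 - u_{n+1-i}`. -/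
def phiR (n : ℕ) : (Fin n → ℝ) → (Fin n → ℝ) := fun u i => 1 / 2 - u i.rev


/-! For an involution `x = (σ, v)`, the unsigned permutation underlying `σ` is an involution of
`{1, …, n}`, and the parity of `vᵢ` as well as the sign of `σ(i)` is constant on each of its
2-cycles. Hence modulo 2 only the 1-cycles count: `Σx ≡ k_o` and `minus(x) ≡ k_e + k_o`, and
membership in `W(D̃ₙ)` makes both even.

If `σ(i) = ±i` for some `i`, the reflection `g = (i ↦ -i, vᵢ eᵢ)` commutes with `x`, and
`Σg = vᵢ`, `minus(g) = 1`. So `g` lies in `W(B̃ₙ)` but not in `B̄(B̃ₙ)` when `vᵢ` is even, and the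
other way round when `vᵢ` is odd. As `W(D̃ₙ)` has index two in both groups, composing with `g`
turns a conjugator from the larger group into one from `W(D̃ₙ)`. -/

theorem Finset.sum_eq_sum_filter_fixed_of_involutive {α R : Type*} [Fintype α] [DecidableEq α]
    [Ring R] [CharP R 2] {π : α → α} (hπ : Function.Involutive π) {f : α → R}
    (hf : ∀ i, f (π i) = f i) :
    ∑ i, f i = ∑ i ∈ univ.filter (fun i => π i = i), f i := by
  rw [← sum_filter_add_sum_filter_not univ (fun i => π i = i), add_eq_left]
  refine sum_involution (fun i _ => π i) (fun i _ => by rw [hf, CharTwo.add_self_eq_zero])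
    (fun i hi _ => (mem_filter.mp hi).2) (fun i hi => ?_) (fun i _ => hπ i)
  simpa [hπ i, eq_comm] using hi

lemma conjugacyClassOf_inf_eq {M : Type*} [Group M] {G K : Subgroup M}
    (hK : ∀ a b, a ∉ K → b ∉ K → a * b ∈ K) {x g : M} (hgG : g ∈ G) (hgK : g ∉ K)
    (hgx : Commute g x) : ConjugacyClassOf (G ⊓ K) x = ConjugacyClassOf G x := by
  ext y
  constructor
  · rintro ⟨h, hh, rfl⟩
    exact ⟨h, (Subgroup.mem_inf.mp hh).1, rfl⟩
  · rintro ⟨h, hhG, rfl⟩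
    by_cases hhK : h ∈ K
    · exact ⟨h, Subgroup.mem_inf.mpr ⟨hhG, hhK⟩, rfl⟩
    · refine ⟨g * h, Subgroup.mem_inf.mpr ⟨G.mul_mem hgG hhG, hK g h hgK hhK⟩, ?_⟩
      rw [mul_inv_rev, mul_assoc, mul_assoc, ← mul_assoc x, ← hgx.eq]
      group

lemma Subgroup.mul_mem_of_notMem_of_notMem {M : Type*} [Group M] {K : Subgroup M}
    (f : M → ZMod 2) (hf : ∀ a b, f (a * b) = f a + f b) (hK : ∀ a, a ∈ K ↔ f a = 0)
    {a b : M} (ha : a ∉ K) (hb : b ∉ K) : a * b ∈ K := by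
  rw [hK] at ha hb ⊢
  rw [hf]
  generalize f a = u at ha
  generalize f b = v at hb
  revert u v
  decide

lemma mem_WB_iff {n : ℕ} {w : WC n} : w ∈ WB n ↔ ((sumV w : ℤ) : ZMod 2) = 0 :=
  even_int_iff_zmod

lemma mem_Bbar_iff {n : ℕ} {w : WC n} :
    w ∈ Bbar n ↔ ((sumV w : ℤ) : ZMod 2) - (minusCard w : ZMod 2) = 0 := by
  rw [sub_eq_zero, ← Int.cast_natCast]
  exact intModEq_two_iff

lemma mul_mem_WB {n : ℕ} {a b : WC n} (ha : a ∉ WB n) (hb : b ∉ WB n) : a * b ∈ WB n :=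
  Subgroup.mul_mem_of_notMem_of_notMem _ sumV_mul (fun _ => mem_WB_iff) ha hb

lemma mul_mem_Bbar {n : ℕ} {a b : WC n} (ha : a ∉ Bbar n) (hb : b ∉ Bbar n) :
    a * b ∈ Bbar n :=
  Subgroup.mul_mem_of_notMem_of_notMem _
    (fun a b => by rw [sumV_mul, minusCard_mul]; ring) (fun _ => mem_Bbar_iff) ha hb

lemma permOf_snd {n : ℕ} (σ : Hgrp n) (p : Pt n) :
    permOf σ p.2 = ((σ : Perm (Pt n)) p).2 := by
  rw [Hgrp_apply σ.2 p.1 p.2]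
  rfl

lemma apply_one_eq_of_permOf_eq {n : ℕ} {σ : Hgrp n} {i : Fin n} (hi : permOf σ i = i) :
    (σ : Perm (Pt n)) (1, i) = (1, i) ∨ (σ : Perm (Pt n)) (1, i) = (-1, i) := by
  rcases Int.units_eq_one_or ((σ : Perm (Pt n)) (1, i)).1 with h | h
  · exact Or.inl (Prod.ext h hi)
  · exact Or.inr (Prod.ext h hi)

lemma negAt_apply {n : ℕ} (k : Fin n) (p : Pt n) :
    negAt k p = if p.2 = k then negPt p else p := rfl

lemma commute_negAt {n : ℕ} {σ : Hgrp n} {i : Fin n} (hi : permOf σ i = i) :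
    Commute (negAt i) (σ : Perm (Pt n)) := by
  have hsnd : ∀ p : Pt n, ((σ : Perm (Pt n)) p).2 = i ↔ p.2 = i := fun p => by
    rw [← permOf_snd]
    conv_lhs => rw [← hi]
    exact (permOf σ).injective.eq_iff
  ext1 p
  simp only [Perm.mul_apply, negAt_apply, hsnd]
  split_ifs
  · exact (σ.2 p).symm
  · rfl

def reflAt {n : ℕ} (i : Fin n) (c : ℤ) : WC n := mkW (negAt i) (negAt_mem i) (Pi.single i c)

section reflAt

variable {n : ℕ} (i : Fin n) (c : ℤ)

lemma sumV_reflAt : sumV (reflAt i c) = c := by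
  simp [sumV, reflAt, mkW]

lemma minusCard_reflAt : minusCard (reflAt i c) = 1 := by
  have h : ∀ j, ((negAt i) (1, j)).1 = -1 ↔ j = i := fun j => by
    by_cases hji : j = i <;> simp [negAt_apply, negPt, hji]
  show (univ.filter fun j => ((negAt i) (1, j)).1 = -1).card = 1
  rw [filter_congr fun j _ => h j, filter_eq', if_pos (mem_univ i), card_singleton]

lemma reflAt_mem_WB_iff : reflAt i c ∈ WB n ↔ Even c := by
  rw [mem_WB_iff, sumV_reflAt, ZMod.intCast_eq_zero_iff_even]

lemma reflAt_mem_Bbar_iff : reflAt i c ∈ Bbar n ↔ Odd c := by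
  rw [mem_Bbar_iff, sumV_reflAt, minusCard_reflAt, sub_eq_zero, Nat.cast_one,
    ZMod.intCast_eq_one_iff_odd]

end reflAt

namespace WC

variable {n : ℕ} {x : WC n}

lemma sigma_apply_sigma_apply (hx : x * x = 1) (p : Pt n) :
    (x.sigma : Perm (Pt n)) ((x.sigma : Perm (Pt n)) p) = p := by
  rw [← Perm.mul_apply, ← Subgroup.coe_mul, ← mul_sigma, hx]
  rfl

lemma permOf_involutive (hx : x * x = 1) : Function.Involutive (permOf x.sigma) := fun i => by
  simpa [sigma_apply_sigma_apply hx] using permOf_snd x.sigma ((x.sigma : Perm (Pt n)) (1, i))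

lemma sign_permOf (hx : x * x = 1) (i : Fin n) :
    ((x.sigma : Perm (Pt n)) (1, permOf x.sigma i)).1 = ((x.sigma : Perm (Pt n)) (1, i)).1 := by
  have h := congrArg Prod.fst (sigma_apply_sigma_apply hx (1, i))
  rw [Hgrp_apply x.sigma.2] at h
  exact (eq_inv_of_mul_eq_one_right h).trans (Int.units_inv_eq_self _)

lemma sign_mul_vec_permOf (hx : x * x = 1) (j : Fin n) :
    (((x.sigma : Perm (Pt n)) (1, j)).1 : ℤ) * x.vec (permOf x.sigma j) = -x.vec j := by
  have h := congrFun (congrArg WC.vec hx) j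
  simp only [mul_vec, Pi.add_apply, one_vec, Pi.zero_apply, actV] at h
  rw [permOf_apply]
  linarith

lemma intCast_vec_permOf (hx : x * x = 1) (i : Fin n) :
    ((x.vec (permOf x.sigma i) : ℤ) : ZMod 2) = x.vec i := by
  have h := congrArg (fun a : ℤ => (a : ZMod 2)) (sign_mul_vec_permOf hx i)
  simp only [Int.cast_mul, Int.cast_neg, unitsCast_zmod2, one_mul] at h
  rw [h, ZMod.neg_eq_self_mod_two]

lemma vec_eq_zero_of_apply_eq (hx : x * x = 1) {i : Fin n}
    (h : (x.sigma : Perm (Pt n)) (1, i) = (1, i)) : x.vec i = 0 := by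
  have := sign_mul_vec_permOf hx i
  rw [permOf_apply, h, Units.val_one, one_mul] at this
  linarith

lemma intCast_sumV (hx : x * x = 1) :
    ((sumV x : ℤ) : ZMod 2) = ((lct x).2.2.1 : ZMod 2) := by
  calc ((sumV x : ℤ) : ZMod 2)
      = ∑ i, ((x.vec i : ℤ) : ZMod 2) := by simp only [sumV, Int.cast_sum]
    _ = ∑ i ∈ univ.filter (fun i => permOf x.sigma i = i), ((x.vec i : ℤ) : ZMod 2) :=
        sum_eq_sum_filter_fixed_of_involutive (permOf_involutive hx) (intCast_vec_permOf hx)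
    _ = ∑ i, if (x.sigma : Perm (Pt n)) (1, i) = (-1, i) ∧ Odd (x.vec i) then 1 else 0 := by
        rw [sum_filter]
        refine sum_congr rfl fun i _ => ?_
        by_cases hi : permOf x.sigma i = i
        · rcases apply_one_eq_of_permOf_eq hi with h | h
          · simp [hi, h, vec_eq_zero_of_apply_eq hx h]
          · by_cases hodd : Odd (x.vec i)
            · simp [hi, h, hodd, ZMod.intCast_eq_one_iff_odd]
            · simp [hi, h, hodd, ZMod.intCast_eq_zero_iff_even, Int.not_odd_iff_even.mp hodd]
        · have h : (x.sigma : Perm (Pt n)) (1, i) ≠ (-1, i) := fun h => hi (congrArg Prod.snd h)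
          rw [if_neg hi, if_neg fun h' => h h'.1]
    _ = ((lct x).2.2.1 : ZMod 2) := by rw [sum_boole]; rfl

lemma natCast_minusCard (hx : x * x = 1) :
    ((minusCard x : ℕ) : ZMod 2) = ((lct x).2.1 + (lct x).2.2.1 : ℕ) := by
  calc ((minusCard x : ℕ) : ZMod 2)
      = ∑ i, if ((x.sigma : Perm (Pt n)) (1, i)).1 = -1 then (1 : ZMod 2) else 0 := by
        rw [sum_boole]; rfl
    _ = ∑ i ∈ univ.filter (fun i => permOf x.sigma i = i),
          if ((x.sigma : Perm (Pt n)) (1, i)).1 = -1 then (1 : ZMod 2) else 0 :=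
        sum_eq_sum_filter_fixed_of_involutive (permOf_involutive hx)
          (fun i => by rw [sign_permOf hx])
    _ = ∑ i, if (x.sigma : Perm (Pt n)) (1, i) = (-1, i) then (1 : ZMod 2) else 0 := by
        rw [sum_filter]
        refine sum_congr rfl fun i _ => ?_
        by_cases hi : permOf x.sigma i = i
        · rcases apply_one_eq_of_permOf_eq hi with h | h <;> simp [hi, h]
        · have h : (x.sigma : Perm (Pt n)) (1, i) ≠ (-1, i) := fun h => hi (congrArg Prod.snd h)
          rw [if_neg hi, if_neg h]
    _ = ((lct x).2.1 + (lct x).2.2.1 : ℕ) := by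
        rw [sum_boole, ← card_filter_add_card_filter_not (p := fun i => Even (x.vec i))]
        simp [lct, filter_filter, Int.not_even_iff_odd]

lemma commute_reflAt (hx : x * x = 1) {i : Fin n} (hi : permOf x.sigma i = i) :
    Commute (reflAt i (x.vec i)) x := by
  refine WC.ext (Subtype.ext (commute_negAt hi).eq) (funext fun j => ?_)
  by_cases hji : j = i
  · subst hji
    have hrel := sign_mul_vec_permOf hx j
    rw [hi] at hrel
    simp [reflAt, mkW, actV, negAt_apply, negPt, ← permOf_apply, hi, hrel]
  · have hπj : permOf x.sigma j ≠ i := by rwa [← hi, (permOf x.sigma).injective.ne_iff]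
    simp [reflAt, mkW, actV, negAt_apply, ← permOf_apply, hji, hπj]

lemma conjugacyClassOf_WD_eq (hx : x * x = 1) {i : Fin n} (hi : permOf x.sigma i = i) :
    ConjugacyClassOf (WD n) x = ConjugacyClassOf (WB n) x ∨
      ConjugacyClassOf (WD n) x = ConjugacyClassOf (Bbar n) x := by
  have hg := commute_reflAt hx hi
  rcases Int.even_or_odd (x.vec i) with he | ho
  · refine Or.inl (conjugacyClassOf_inf_eq (fun _ _ => mul_mem_Bbar)
      ((reflAt_mem_WB_iff _ _).mpr he) (fun h => ?_) hg)
    exact Int.not_odd_iff_even.mpr he ((reflAt_mem_Bbar_iff _ _).mp h)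
  · refine Or.inr ?_
    rw [WD, inf_comm]
    refine conjugacyClassOf_inf_eq (fun _ _ => mul_mem_WB)
      ((reflAt_mem_Bbar_iff _ _).mpr ho) (fun h => ?_) hg
    exact Int.not_even_iff_odd.mpr ho ((reflAt_mem_WB_iff _ _).mp h)

lemma exists_permOf_eq_of_lct {m ke ko l : ℕ} (hl : lct x = (m, ke, ko, l))
    (h : ke ≠ 0 ∨ ko ≠ 0 ∨ l ≠ 0) : ∃ i, permOf x.sigma i = i := by
  simp only [lct, Prod.mk.injEq] at hl
  obtain ⟨-, rfl, rfl, rfl⟩ := hl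
  have hfix : ∀ {i ε}, (x.sigma : Perm (Pt n)) (1, i) = (ε, i) → permOf x.sigma i = i :=
    congrArg Prod.snd
  rcases h with h | h | h <;> obtain ⟨i, hi⟩ := card_ne_zero.mp h
  · exact ⟨i, hfix (mem_filter.mp hi).2.1⟩
  · exact ⟨i, hfix (mem_filter.mp hi).2.1⟩
  · exact ⟨i, hfix (mem_filter.mp hi).2⟩

end WC

theorem WD_conjugacy_classes_general (n : ℕ) (x : WC n) (hx : x ∈ WD n)
    (h2 : orderOf x = 2) (m ke ko l : ℕ) (hl : lct x = (m, ke, ko, l)) :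
    Even ke ∧ Even ko ∧
    ((ke ≠ 0 ∨ ko ≠ 0 ∨ l ≠ 0) →
      (ConjugacyClassOf (WD n) x = ConjugacyClassOf (WB n) x ∨
       ConjugacyClassOf (WD n) x = ConjugacyClassOf (Bbar n) x)) := by
  have hx2 : x * x = 1 := by rw [← sq, ← h2, pow_orderOf_eq_one]
  obtain ⟨hxWB, hxBbar⟩ := Subgroup.mem_inf.mp hx
  have hsum := mem_WB_iff.mp hxWB
  have hminus := mem_Bbar_iff.mp hxBbar
  have hko := WC.intCast_sumV hx2
  have hkeko := WC.natCast_minusCard hx2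
  simp only [hl, Nat.cast_add] at hko hkeko
  refine ⟨ZMod.natCast_eq_zero_iff_even.mp (by linear_combination hko - hkeko - hminus),
    ZMod.natCast_eq_zero_iff_even.mp (by linear_combination hsum - hko), fun h => ?_⟩
  obtain ⟨i, hi⟩ := WC.exists_permOf_eq_of_lct hl h
  exact WC.conjugacyClassOf_WD_eq hx2 hi

theorem WD_conjugacy_classes (n : ℕ) (hn : 4 ≤ n) (x : WC n) (hx : x ∈ WD n)
    (h2 : orderOf x = 2) (m ke ko l : ℕ) (hl : lct x = (m, ke, ko, l)) :
    Even ke ∧ Even ko ∧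
    ((ke ≠ 0 ∨ ko ≠ 0 ∨ l ≠ 0) →
      (ConjugacyClassOf (WD n) x = ConjugacyClassOf (WB n) x ∨
       ConjugacyClassOf (WD n) x = ConjugacyClassOf (Bbar n) x)) :=
  WD_conjugacy_classes_general n x hx h2 m ke ko l hl
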